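/- Let p ≥ 3 be a prime, a_1, …, a_{p−1} nonzero in 𝔽_p, and b_1, …, b_p ∈ 𝔽_p with b_p ≠ 0. If the system ∑_{j=1}^{p−1} a_j x_j^{p−1} = 0, ∑_{j=1}^{p} b_j x_j = 0 has no solution in 𝔽_p^p at which some 2×2 Jacobian minor is nonzero, then a_1 = a_2 = ⋯ = a_{p−1}. -/

import Mathlib

/-!
If `S ⊆ {1, …, p - 1}` is nonempty with `∑_{j ∈ S} a_j = 0`, the indicator of `S` in the first
`p - 1` coordinates, completed by the value of `x_p` that solves the linear equation (possible as
`b_p ≠ 0`), is a solution of the system whose minor at `(i, p)`, `i ∈ S`, equals `-a_i b_p ≠ 0`.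
So `(a_j)` is a zero-sum-free sequence of length `p - 1` in `ℤ/p`, and such a sequence is constant:
if `a_i ≠ a_j`, then `a_i`, `a_j` and the `a_i + a_j + σ`, `σ` running over the at least `p - 2`
subset sums of the remaining `p - 3` terms, would be `p` distinct nonzero residues.
-/

open Finset

section ZeroSumFree

variable {ι G : Type*} [AddCommGroup G]

def ZeroSumFree (a : ι → G) : Prop :=
  ∀ t : Finset ι, t.Nonempty → ∑ i ∈ t, a i ≠ 0

def subsetSums [DecidableEq G] (a : ι → G) (s : Finset ι) : Finset G :=
  s.powerset.image fun t => ∑ i ∈ t, a i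

variable {a : ι → G}

theorem ZeroSumFree.add_sum_ne_zero [DecidableEq ι] (ha : ZeroSumFree a) {k : ι} {t : Finset ι}
    (hk : k ∉ t) : a k + ∑ i ∈ t, a i ≠ 0 := by
  rw [← sum_insert hk]
  exact ha _ (insert_nonempty _ _)

/-- A new total sum `a x + ∑ s` is never among the subset sums of `s`, since their difference is
the sum over a set containing `x`. -/
theorem ZeroSumFree.card_add_one_le_card_subsetSums [DecidableEq ι] [DecidableEq G]
    (ha : ZeroSumFree a) (s : Finset ι) : #s + 1 ≤ #(subsetSums a s) := by
  induction s using Finset.induction_on with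
  | empty => simp [subsetSums]
  | insert x s hx ih =>
    have hnew : a x + ∑ i ∈ s, a i ∉ subsetSums a s := by
      simp only [subsetSums, mem_image, mem_powerset, not_exists, not_and]
      intro t ht heq
      apply ha.add_sum_ne_zero (fun h => hx (mem_sdiff.1 h).1 : x ∉ s \ t)
      rw [← sub_eq_zero.2 heq.symm, ← sum_sdiff ht]
      abel
    have hsub : insert (a x + ∑ i ∈ s, a i) (subsetSums a s) ⊆ subsetSums a (insert x s) := by
      simp only [subsetSums, insert_subset_iff, mem_image, mem_powerset]
      refine ⟨⟨insert x s, subset_rfl, sum_insert hx⟩, ?_⟩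
      exact image_subset_image (powerset_mono.2 (subset_insert x s))
    calc #(insert x s) + 1 = #s + 1 + 1 := by rw [card_insert_of_notMem hx]
      _ ≤ #(subsetSums a s) + 1 := by omega
      _ = #(insert (a x + ∑ i ∈ s, a i) (subsetSums a s)) := (card_insert_of_notMem hnew).symm
      _ ≤ #(subsetSums a (insert x s)) := card_le_card hsub

theorem ZeroSumFree.apply_eq_of_card_le [Fintype ι] [Fintype G] (ha : ZeroSumFree a)
    (hcard : Fintype.card G ≤ Fintype.card ι + 1) (i j : ι) : a i = a j := by
  classical
  by_contra hne
  have hij : i ≠ j := fun h => hne (h ▸ rfl)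
  set R := (univ.erase i).erase j
  have hR {t : Finset ι} (ht : t ⊆ R) : i ∉ t ∧ j ∉ t :=
    ⟨fun h => by simpa [R] using ht h, fun h => by simpa [R] using ht h⟩
  have hshift {t : Finset ι} (ht : t ⊆ R) : a i + a j + ∑ l ∈ t, a l ≠ 0 := by
    rw [add_assoc, ← sum_insert (hR ht).2]
    exact ha.add_sum_ne_zero (by simpa [hij] using (hR ht).1)
  set Y := (subsetSums a R).image (a i + a j + ·)
  have hY {x : G} : x ∈ Y ↔ ∃ t ⊆ R, a i + a j + ∑ l ∈ t, a l = x := by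
    simp only [Y, subsetSums, image_image, mem_image, mem_powerset, Function.comp_apply]
  have hiY : a i ∉ insert (a j) Y := by
    rw [mem_insert, hY, not_or]
    refine ⟨hne, fun ⟨t, ht, h⟩ => ha.add_sum_ne_zero (hR ht).2 ?_⟩
    rw [← add_right_inj (a i), add_zero, ← add_assoc, h]
  have hjY : a j ∉ Y := by
    refine hY.not.2 fun ⟨t, ht, h⟩ => ha.add_sum_ne_zero (hR ht).1 ?_
    rw [← add_right_inj (a j), add_zero, ← add_assoc, add_comm (a j), h]
  have hX : insert (a i) (insert (a j) Y) ⊆ univ.erase 0 := by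
    simp only [insert_subset_iff, mem_erase, mem_univ, and_true]
    refine ⟨by simpa using ha {i}, by simpa using ha {j}, fun x hx => ?_⟩
    obtain ⟨t, ht, rfl⟩ := hY.1 hx
    exact mem_erase.2 ⟨hshift ht, mem_univ _⟩
  have hcardR : #R + 2 = Fintype.card ι := by
    rw [← card_univ, ← card_erase_add_one (mem_univ i),
      ← card_erase_add_one (mem_erase.2 ⟨hij.symm, mem_univ j⟩)]
  have hcardY : #Y = #(subsetSums a R) := card_image_of_injective _ (add_right_injective _)
  have := card_le_card hX
  rw [card_erase_of_mem (mem_univ _), card_univ, card_insert_of_notMem hiY,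
    card_insert_of_notMem hjY] at this
  have := ha.card_add_one_le_card_subsetSums R
  omega

end ZeroSumFree

theorem sum_fin_eq_sum_castLE_add {M : Type*} [AddCommMonoid M] {p : ℕ} (hp : 0 < p)
    (f : Fin p → M) :
    ∑ i, f i = ∑ j : Fin (p - 1), f (Fin.castLE (Nat.sub_le p 1) j) +
      f ⟨p - 1, Nat.sub_lt hp one_pos⟩ := by
  obtain ⟨n, rfl⟩ := Nat.exists_eq_succ_of_ne_zero hp.ne'
  exact Fin.sum_univ_castSucc f

theorem exists_nonsingular_of_sum_eq_zero (p : ℕ) [hp : Fact p.Prime]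
    (a : Fin (p - 1) → ZMod p) (ha : ∀ j, a j ≠ 0)
    (b : Fin p → ZMod p) (hbp : b ⟨p - 1, Nat.sub_lt hp.out.pos one_pos⟩ ≠ 0)
    {S : Finset (Fin (p - 1))} (hS : S.Nonempty) (hsum : ∑ j ∈ S, a j = 0) :
    ∃ x : Fin p → ZMod p,
      (∑ j : Fin (p - 1), a j * x (Fin.castLE (by omega) j) ^ (p - 1)) = 0 ∧
      (∑ i, b i * x i) = 0 ∧
      ∃ i j : Fin p,
        (if h : (i : ℕ) < p - 1 then (p - 1 : ZMod p) * a ⟨i, h⟩ * x i ^ (p - 2) else 0) * b j -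
        (if h : (j : ℕ) < p - 1 then (p - 1 : ZMod p) * a ⟨j, h⟩ * x j ^ (p - 2) else 0) * b i
          ≠ 0 := by
  set L : Fin p := ⟨p - 1, Nat.sub_lt hp.out.pos one_pos⟩
  set c := -(b L)⁻¹ * ∑ j ∈ S, b (Fin.castLE (Nat.sub_le p 1) j)
  let x : Fin p → ZMod p := fun i =>
    if h : (i : ℕ) < p - 1 then (if ⟨i, h⟩ ∈ S then 1 else 0) else c
  have hx_castLE (j : Fin (p - 1)) :
      x (Fin.castLE (Nat.sub_le p 1) j) = if j ∈ S then 1 else 0 := by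
    simp [x]
  have hx_last : x L = c := by simp [x, L]
  obtain ⟨i₀, hi₀⟩ := hS
  refine ⟨x, ?_, ?_, Fin.castLE (Nat.sub_le p 1) i₀, L, ?_⟩
  · simp only [hx_castLE, ite_pow, one_pow, zero_pow (Nat.sub_ne_zero_of_lt hp.out.one_lt),
      mul_ite, mul_one, mul_zero, sum_ite_mem, univ_inter]
    exact hsum
  · have hc : b L * c = -∑ j ∈ S, b (Fin.castLE (Nat.sub_le p 1) j) := by
      rw [← mul_assoc, mul_neg, mul_inv_cancel₀ hbp, neg_one_mul]
    rw [sum_fin_eq_sum_castLE_add hp.out.pos, hx_last, hc]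
    simp only [hx_castLE, mul_ite, mul_one, mul_zero, sum_ite_mem, univ_inter]
    exact add_neg_cancel _
  · simp [i₀.isLt, L, hx_castLE, hi₀, ha i₀, hbp]

theorem stmt_6 (p : ℕ) (hp : p.Prime) (hp3 : 3 ≤ p)
    (a : Fin (p - 1) → ZMod p) (ha : ∀ j, a j ≠ 0)
    (b : Fin p → ZMod p) (hbp : b ⟨p - 1, by omega⟩ ≠ 0)
    (hns : ¬ ∃ x : Fin p → ZMod p,
      (∑ j : Fin (p - 1), a j * x (Fin.castLE (by omega) j) ^ (p - 1)) = 0 ∧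
      (∑ i, b i * x i) = 0 ∧
      ∃ i j : Fin p,
        (if h : (i : ℕ) < p - 1 then (p - 1 : ZMod p) * a ⟨i, h⟩ * x i ^ (p - 2) else 0) * b j -
        (if h : (j : ℕ) < p - 1 then (p - 1 : ZMod p) * a ⟨j, h⟩ * x j ^ (p - 2) else 0) * b i
          ≠ 0) :
    ∀ i j, a i = a j := by
  have : Fact p.Prime := ⟨hp⟩
  have hfree : ZeroSumFree a := fun S hS hsum =>
    hns (exists_nonsingular_of_sum_eq_zero p a ha b hbp hS hsum)
  exact hfree.apply_eq_of_card_le (by simp only [ZMod.card, Fintype.card_fin]; omega)
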